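/- Let E be a real inner product space and let h ∈ E. Set z = h / (1 + √(1 + ‖h‖²)). Then ‖z‖ < 1 and the Poincaré distance from the origin to z equals arsinh(‖h‖), i.e. arcosh(1 + 2‖z‖² / (1 − ‖z‖²)) = arsinh(‖h‖) = log(‖h‖ + √(1 + ‖h‖²)). -/

import Mathlib

/-- Inverse hyperbolic cosine: `arcosh x = log (x + √(x² − 1))` for `x ≥ 1`. -/
noncomputable def arcosh (x : ℝ) : ℝ := Real.log (x + Real.sqrt (x ^ 2 - 1))

/-!
Write `‖h‖ = sinh u` with `u = arsinh ‖h‖`. Then `√(1 + ‖h‖²) = cosh u`, so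
`‖z‖ = sinh u / (1 + cosh u) = tanh (u / 2) < 1`, and
`1 + 2‖z‖² / (1 - ‖z‖²) = (1 + ‖z‖²) / (1 - ‖z‖²) = cosh u`, whose `arcosh` is `u`.
-/

section SqrtOneAddSq

variable (r : ℝ)

lemma abs_div_one_add_sqrt_one_add_sq_lt_one : |r / (1 + √(1 + r ^ 2))| < 1 := by
  have hpos : 0 < 1 + √(1 + r ^ 2) := by positivity
  have habs : |r| ≤ √(1 + r ^ 2) := by
    rw [← Real.sqrt_sq_eq_abs]
    exact Real.sqrt_le_sqrt (by linarith)
  rw [abs_div, abs_of_pos hpos, div_lt_one hpos]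
  linarith

lemma one_add_two_mul_sq_div_one_sub_sq_div_one_add_sqrt :
    1 + 2 * (r / (1 + √(1 + r ^ 2))) ^ 2 / (1 - (r / (1 + √(1 + r ^ 2))) ^ 2) =
      √(1 + r ^ 2) := by
  set s := √(1 + r ^ 2)
  have hs : s ^ 2 = 1 + r ^ 2 := Real.sq_sqrt (by positivity)
  have hpos : 0 < 1 + s := by positivity
  have hsub : 1 - (r / (1 + s)) ^ 2 = 2 / (1 + s) := by
    field_simp
    linear_combination hs
  rw [hsub]
  field_simp
  linear_combination -hs

end SqrtOneAddSq

lemma arcosh_sqrt_one_add_sq {r : ℝ} (hr : 0 ≤ r) : arcosh √(1 + r ^ 2) = Real.arsinh r := by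
  rw [← Real.cosh_arsinh]
  -- `arcosh` unfolds to Mathlib's `Real.arcosh`
  exact Real.arcosh_cosh (Real.arsinh_nonneg_iff.2 hr)

lemma norm_inv_one_add_sqrt_smul {E : Type*} [SeminormedAddCommGroup E] [NormedSpace ℝ E]
    (h : E) : ‖(1 + √(1 + ‖h‖ ^ 2))⁻¹ • h‖ = ‖h‖ / (1 + √(1 + ‖h‖ ^ 2)) := by
  rw [norm_smul, norm_inv, Real.norm_of_nonneg (by positivity), inv_mul_eq_div]

theorem hyperbolic_embedding_dist_from_origin {E : Type*} [NormedAddCommGroup E]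
    [InnerProductSpace ℝ E] (h : E) :
    ‖(1 + Real.sqrt (1 + ‖h‖ ^ 2))⁻¹ • h‖ < 1 ∧
    arcosh (1 + 2 * ‖(1 + Real.sqrt (1 + ‖h‖ ^ 2))⁻¹ • h‖ ^ 2 /
        (1 - ‖(1 + Real.sqrt (1 + ‖h‖ ^ 2))⁻¹ • h‖ ^ 2)) = Real.arsinh ‖h‖ ∧
    Real.arsinh ‖h‖ = Real.log (‖h‖ + Real.sqrt (1 + ‖h‖ ^ 2)) := by
  rw [norm_inv_one_add_sqrt_smul]
  refine ⟨?_, ?_, rfl⟩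
  · exact (le_abs_self _).trans_lt (abs_div_one_add_sqrt_one_add_sq_lt_one ‖h‖)
  · rw [one_add_two_mul_sq_div_one_sub_sq_div_one_add_sqrt,
      arcosh_sqrt_one_add_sq (norm_nonneg h)]
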